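/- Let X be a real random variable with distribution F, 0 < ε < 1/2, q(ε) = 1/(2(1-ε)), and suppose A = F^{-1}(1 - q(ε)) and B = F^{-1}(q(ε)) exist uniquely. Then for any point x ∈ ℝ, the median of the point-mass contaminated distribution satisfies Med(F(ε, δ_x)) = Med{A, B, x}, the middle value of the three numbers A, B, x. -/

import Mathlib

/-!
Write `q = 1 / (2(1 - ε))`, so that `(1 - ε) q = 1/2`. The cdf of `F(ε, δ_x)` is
`(1 - ε) F(t) + ε 1[x ≤ t]`, which is at least `1/2` exactly when `x ≤ t` and `F(t) ≥ 1 - q`, or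
`F(t) ≥ q`. Since `A` and `B` are the only solutions of `F = 1 - q` and `F = q`, these conditions read
`A ≤ t` and `B ≤ t`, so the level set defining the median is the ray `[min (max A x) B, ∞)`, and
`min (max A x) B` is the middle value of `A, B, x` because `A ≤ B`.
-/

open MeasureTheory ProbabilityTheory
open scoped ENNReal

/-- ε-contamination `F(ε, G) = (1-ε)F + εG`. -/
noncomputable def mix {α : Type*} [MeasurableSpace α] (ε : ℝ) (F G : Measure α) : Measure α :=
  ENNReal.ofReal (1 - ε) • F + ENNReal.ofReal ε • G

noncomputable def quant (μ : Measure ℝ) (p : ℝ) : ℝ := sInf {x : ℝ | p ≤ cdf μ x}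

noncomputable def med (μ : Measure ℝ) : ℝ := quant μ (1 / 2)

/-- The middle value of three real numbers. -/
noncomputable def mid3 (a b c : ℝ) : ℝ := a + b + c - max a (max b c) - min a (min b c)

lemma mid3_eq_min_max {a b : ℝ} (hab : a ≤ b) (c : ℝ) : mid3 a b c = min (max a c) b := by
  simp only [mid3, max_def, min_def]
  split_ifs <;> linarith

lemma Monotone.le_apply_iff_of_unique_preimage {α β : Type*} [LinearOrder α] [PartialOrder β]
    {f : α → β} (hf : Monotone f) {a : α} {c : β} (ha : f a = c)
    (hu : ∀ t, f t = c → t = a) (t : α) : c ≤ f t ↔ a ≤ t := by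
  refine ⟨fun hct => ?_, fun hat => ha ▸ hf hat⟩
  by_contra! hta
  exact hta.ne (hu t (le_antisymm (ha ▸ hf hta.le) hct))

section Mix

variable {α : Type*} [MeasurableSpace α] {ε : ℝ}

lemma isProbabilityMeasure_mix (hε0 : 0 ≤ ε) (hε1 : ε ≤ 1) (F G : Measure α)
    [IsProbabilityMeasure F] [IsProbabilityMeasure G] : IsProbabilityMeasure (mix ε F G) := by
  constructor
  simp only [mix, Measure.add_apply, Measure.smul_apply, smul_eq_mul, measure_univ, mul_one]
  rw [← ENNReal.ofReal_add (by linarith) hε0]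
  norm_num

lemma measureReal_mix (hε0 : 0 ≤ ε) (hε1 : ε ≤ 1) (F G : Measure α)
    [IsFiniteMeasure F] [IsFiniteMeasure G] (s : Set α) :
    (mix ε F G).real s = (1 - ε) * F.real s + ε * G.real s := by
  simp only [mix, Measure.real, Measure.add_apply, Measure.smul_apply, smul_eq_mul]
  rw [ENNReal.toReal_add (by finiteness) (by finiteness), ENNReal.toReal_mul, ENNReal.toReal_mul,
    ENNReal.toReal_ofReal (by linarith), ENNReal.toReal_ofReal hε0]

end Mix

lemma cdf_mix {ε : ℝ} (hε0 : 0 ≤ ε) (hε1 : ε ≤ 1) (F G : Measure ℝ)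
    [IsProbabilityMeasure F] [IsProbabilityMeasure G] (t : ℝ) :
    cdf (mix ε F G) t = (1 - ε) * cdf F t + ε * cdf G t := by
  have := isProbabilityMeasure_mix hε0 hε1 F G
  simp only [cdf_eq_real, measureReal_mix hε0 hε1]

lemma cdf_dirac (x t : ℝ) : cdf (Measure.dirac x) t = if x ≤ t then 1 else 0 := by
  rw [cdf_eq_real, Measure.real, Measure.dirac_apply' _ measurableSet_Iic]
  split_ifs with h <;> simp [h]

lemma half_le_cdf_mix_dirac_iff {ε : ℝ} (hε0 : 0 ≤ ε) (hε1 : ε < 1) (F : Measure ℝ)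
    [IsProbabilityMeasure F] (x t : ℝ) :
    1 / 2 ≤ cdf (mix ε F (Measure.dirac x)) t ↔
      (x ≤ t ∧ 1 - 1 / (2 * (1 - ε)) ≤ cdf F t) ∨ 1 / (2 * (1 - ε)) ≤ cdf F t := by
  set q := 1 / (2 * (1 - ε))
  have hq : (1 - ε) * q = 1 / 2 := by
    simp only [q]
    field_simp [(sub_pos.2 hε1).ne']
  have hq_half : 1 / 2 ≤ q := by rw [← hq]; nlinarith
  rw [cdf_mix hε0 hε1.le, cdf_dirac, ← hq]
  split_ifs with hxt
  · refine ⟨fun h => Or.inl ⟨hxt, by nlinarith⟩, ?_⟩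
    rintro (⟨-, h⟩ | h) <;> nlinarith
  · simp only [hxt, false_and, false_or, mul_zero, add_zero]
    exact mul_le_mul_iff_right₀ (by linarith)

lemma med_mix_dirac {ε : ℝ} (hε0 : 0 ≤ ε) (hε1 : ε < 1) (F : Measure ℝ) [IsProbabilityMeasure F]
    {A B : ℝ} (hA : cdf F A = 1 - 1 / (2 * (1 - ε)))
    (hAu : ∀ t : ℝ, cdf F t = 1 - 1 / (2 * (1 - ε)) → t = A)
    (hB : cdf F B = 1 / (2 * (1 - ε))) (hBu : ∀ t : ℝ, cdf F t = 1 / (2 * (1 - ε)) → t = B)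
    (x : ℝ) :
    med (mix ε F (Measure.dirac x)) = min (max A x) B := by
  have hlevel : {t | 1 / 2 ≤ cdf (mix ε F (Measure.dirac x)) t} = Set.Ici (min (max A x) B) := by
    ext t
    simp only [Set.mem_ofPred_eq, Set.mem_Ici, half_le_cdf_mix_dirac_iff hε0 hε1,
      (cdf F).mono.le_apply_iff_of_unique_preimage hA hAu,
      (cdf F).mono.le_apply_iff_of_unique_preimage hB hBu, min_le_iff, max_le_iff]
    tauto
  rw [med, quant, hlevel, csInf_Ici]

/-- Lemma 3.1 (L-ii): `Med(F(ε, δ_x)) = Med{A, B, x}`. -/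
theorem stmt5 (F : Measure ℝ) [IsProbabilityMeasure F]
    (ε : ℝ) (hε1 : 0 < ε) (hε2 : ε < 1 / 2)
    (A B : ℝ)
    (hA : cdf F A = 1 - 1 / (2 * (1 - ε)))
    (hAu : ∀ t : ℝ, cdf F t = 1 - 1 / (2 * (1 - ε)) → t = A)
    (hB : cdf F B = 1 / (2 * (1 - ε)))
    (hBu : ∀ t : ℝ, cdf F t = 1 / (2 * (1 - ε)) → t = B)
    (x : ℝ) :
    med (mix ε F (Measure.dirac x)) = mid3 A B x := by
  have hε : ε < 1 := by linarith
  have hAB : A ≤ B := by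
    have hq : 1 / 2 ≤ 1 / (2 * (1 - ε)) := one_div_le_one_div_of_le (by linarith) (by linarith)
    rw [← (cdf F).mono.le_apply_iff_of_unique_preimage hA hAu, hB]
    linarith
  rw [med_mix_dirac hε1.le hε F hA hAu hB hBu, mid3_eq_min_max hAB]
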